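/- arXiv:2307.00247 — 4 statements merged into one kernel-verified Lean document; each statement's English description precedes it below -/
import Mathlib

section
/- For y > 0 and ε ≥ 0, the supremum over t ≥ 0 of θt − [(t+ε)·ln((t+ε)/y) − (t+ε) + y] equals y·e^θ − y − εθ whenever e^θ·y ≥ ε (i.e., the maximizer t* = y e^θ − ε is nonnegative). -/
/-!
Put `a = t + ε` and `b = y e^θ`. Since `log (a / y) = log (a / b) + θ`, the objective equals
`(b - y - ε θ) - (a log (a / b) - a + b)`, i.e. the claimed value minus the scalar KL divergence
of `a` from `b`. That divergence is nonnegative for `a ≥ 0` and vanishes at `a = b`, which is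
reached by `t = b - ε ≥ 0`.
-/

open Real

namespace Real

lemma sub_le_mul_log_div {a b : ℝ} (ha : 0 ≤ a) (hb : 0 < b) : a - b ≤ a * log (a / b) := by
  have h := mul_le_mul_of_nonneg_left (self_sub_one_le_mul_log (div_nonneg ha hb.le)) hb.le
  calc a - b = b * (a / b - 1) := by field_simp
    _ ≤ b * (a / b * log (a / b)) := h
    _ = a * log (a / b) := by field_simp

lemma mul_log_div_eq_mul_log_div_mul_exp_add (a y θ : ℝ) (hy : 0 < y) :
    a * log (a / y) = a * log (a / (y * exp θ)) + a * θ := by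
  rcases eq_or_ne a 0 with rfl | ha
  · simp
  have hsplit : a / y = a / (y * exp θ) * exp θ := by field_simp
  rw [hsplit, log_mul (by positivity) (exp_pos θ).ne', log_exp]
  ring

end Real

lemma kl_objective_eq_sub_divergence (y ε θ t : ℝ) (hy : 0 < y) :
    θ * t - ((t + ε) * log ((t + ε) / y) - (t + ε) + y) =
      (y * exp θ - y - ε * θ) -
        ((t + ε) * log ((t + ε) / (y * exp θ)) - (t + ε) + y * exp θ) := by
  rw [mul_log_div_eq_mul_log_div_mul_exp_add (t + ε) y θ hy]
  ring

theorem kl_scalar_conjugate (y ε θ : ℝ) (hy : 0 < y) (hε : 0 ≤ ε)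
    (hfeas : ε ≤ y * Real.exp θ) :
    IsLUB {s : ℝ | ∃ t : ℝ, 0 ≤ t ∧
        s = θ * t - ((t + ε) * Real.log ((t + ε) / y) - (t + ε) + y)}
      (y * Real.exp θ - y - ε * θ) := by
  have hb : 0 < y * exp θ := by positivity
  refine IsGreatest.isLUB ⟨⟨y * exp θ - ε, sub_nonneg.2 hfeas, ?_⟩, ?_⟩
  · rw [kl_objective_eq_sub_divergence y ε θ _ hy, sub_add_cancel, div_self hb.ne', log_one]
    ring
  · rintro s ⟨t, ht, rfl⟩
    rw [kl_objective_eq_sub_divergence y ε θ t hy]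
    have := sub_le_mul_log_div (add_nonneg ht hε) hb
    linarith
end

section
/- Shifting Projection feasibility: Given α ∈ ℝ^m, β ∈ ℝ^n, λ > 0 and a cost matrix C ∈ ℝ^{m×n}, define α̃_u = α_u − max_{j} (α_u + β_j − λC_{u,j})/2 and β̃_v = β_v − max_{i} (α_i + β_v − λC_{i,v})/2 (maxima taken over nonempty finite index sets). Then for all u ∈ [m] and v ∈ [n], α̃_u + β̃_v ≤ λ C_{u,v}. -/
/-! Each of the two maxima is at least half the violation `α u + β v - λ C u v` of the pair
`(u, v)` itself, so the two shifts together remove at least the whole violation. -/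

theorem sub_sup'_add_sub_sup'_le {K ι κ : Type*} [Field K] [LinearOrder K] [IsStrictOrderedRing K]
    {s : Finset ι} {t : Finset κ} (hs : s.Nonempty) (ht : t.Nonempty)
    (a : ι → K) (b : κ → K) (c : ι → κ → K) {u : ι} {v : κ} (hu : u ∈ s) (hv : v ∈ t) :
    (a u - t.sup' ht (fun j => (a u + b j - c u j) / 2)) +
      (b v - s.sup' hs (fun i => (a i + b v - c i v) / 2)) ≤ c u v := by
  have hrow := Finset.le_sup' (fun j => (a u + b j - c u j) / 2) hv
  have hcol := Finset.le_sup' (fun i => (a i + b v - c i v) / 2) hu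
  linarith

theorem shifting_projection_feasible_general (m n : ℕ) [NeZero m] [NeZero n]
    (α : Fin m → ℝ) (β : Fin n → ℝ) (C : Fin m → Fin n → ℝ) (lam : ℝ) :
    ∀ (u : Fin m) (v : Fin n),
      (α u - Finset.univ.sup' Finset.univ_nonempty
          (fun j : Fin n => (α u + β j - lam * C u j) / 2)) +
      (β v - Finset.univ.sup' Finset.univ_nonempty
          (fun i : Fin m => (α i + β v - lam * C i v) / 2)) ≤ lam * C u v :=
  fun u v => sub_sup'_add_sub_sup'_le _ _ α β (fun i j => lam * C i j)
    (Finset.mem_univ u) (Finset.mem_univ v)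

theorem shifting_projection_feasible (m n : ℕ) [NeZero m] [NeZero n]
    (α : Fin m → ℝ) (β : Fin n → ℝ) (C : Fin m → Fin n → ℝ) (lam : ℝ)
    (hlam : 0 < lam) :
    ∀ (u : Fin m) (v : Fin n),
      (α u - Finset.univ.sup' Finset.univ_nonempty
          (fun j : Fin n => (α u + β j - lam * C u j) / 2)) +
      (β v - Finset.univ.sup' Finset.univ_nonempty
          (fun i : Fin m => (α i + β v - lam * C i v) / 2)) ≤ lam * C u v :=
  shifting_projection_feasible_general m n α β C lam
end

section
/- Gap-safe ball: under the hypotheses that the dual D is L-strongly concave on a convex set G containing both θ̂ (the maximizer of D over G, with first-order optimality ⟨∇D(θ̂), θ − θ̂⟩ ≤ 0 for θ ∈ G) and a feasible point θ̃ ∈ G, one has ‖θ̂ − θ̃‖₂² ≤ (2/L)·Gap(t, θ̃) for any primal-feasible t, where Gap(t, θ̃) = P(t) − D(θ̃) and P(t) ≥ D(θ̂). -/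
open RealInnerProductSpace

theorem gap_safe_ball_general {d : ℕ}
    (D : EuclideanSpace ℝ (Fin d) → ℝ) (L : ℝ) (hL : 0 < L)
    (G : Set (EuclideanSpace ℝ (Fin d)))
    (hconc : ∀ x ∈ G, ∀ y ∈ G,
      D y ≤ D x + ⟪gradient D x, y - x⟫ - L / 2 * ‖y - x‖ ^ 2)
    (θhat : EuclideanSpace ℝ (Fin d)) (hθhatG : θhat ∈ G)
    (hfoc : ∀ θ ∈ G, ⟪gradient D θhat, θ - θhat⟫ ≤ 0)
    (θtil : EuclideanSpace ℝ (Fin d)) (hθtilG : θtil ∈ G)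
    (Pt : ℝ) (hPt : D θhat ≤ Pt) :
    ‖θhat - θtil‖ ^ 2 ≤ 2 / L * (Pt - D θtil) := by
  have hgrowth : L / 2 * ‖θtil - θhat‖ ^ 2 ≤ D θhat - D θtil := by
    linarith [hconc θhat hθhatG θtil hθtilG, hfoc θtil hθtilG]
  rw [norm_sub_rev, div_mul_eq_mul_div, le_div_iff₀ hL]
  linarith

theorem gap_safe_ball {d : ℕ}
    (D : EuclideanSpace ℝ (Fin d) → ℝ) (L : ℝ) (hL : 0 < L)
    (hdiff : Differentiable ℝ D)
    (G : Set (EuclideanSpace ℝ (Fin d))) (hG : Convex ℝ G)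
    (hconc : ∀ x ∈ G, ∀ y ∈ G,
      D y ≤ D x + ⟪gradient D x, y - x⟫ - L / 2 * ‖y - x‖ ^ 2)
    (θhat : EuclideanSpace ℝ (Fin d)) (hθhatG : θhat ∈ G)
    (hmax : ∀ θ ∈ G, D θ ≤ D θhat)
    (hfoc : ∀ θ ∈ G, ⟪gradient D θhat, θ - θhat⟫ ≤ 0)
    (θtil : EuclideanSpace ℝ (Fin d)) (hθtilG : θtil ∈ G)
    (Pt : ℝ) (hPt : D θhat ≤ Pt) :
    ‖θhat - θtil‖ ^ 2 ≤ 2 / L * (Pt - D θtil) :=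
  gap_safe_ball_general D L hL G hconc θhat hθhatG hfoc θtil hθtilG Pt hPt
end

section
/- Maximum of a linear functional over the intersection of a ball and a half-space (dome): let B = {θ : ‖θ − θ₀‖ ≤ r} and H = {θ : wᵀθ ≤ e} with w ≠ 0, and suppose B ∩ H is nonempty. For x ∈ ℝ^d, if the unconstrained ball maximizer θ₀ + r·x/‖x‖ lies in H, then max over B ∩ H of xᵀθ equals xᵀθ₀ + r‖x‖; otherwise the maximum equals xᵀθ₀ + (e − wᵀθ₀)·(xᵀw)/‖w‖² + √(r² − (e − wᵀθ₀)²/‖w‖²) · √(‖x‖² − (xᵀw)²/‖w‖²), provided |e − wᵀθ₀| ≤ r‖w‖. -/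
/-! Write `c = e - ⟪w, θ0⟫`. For every multiplier `t ≥ 0`, Cauchy–Schwarz bounds `⟪x, θ⟫` on the
dome by `⟪x, θ0⟫ + t c + r ‖x - t • w‖` (weak Lagrangian duality); `t = 0` settles the first case.
In the second case put `s = √(r² - c²/‖w‖²)` and `m = √(‖x‖² - ⟪x, w⟫²/‖w‖²)`. If `s > 0`, the
multiplier `t = (⟪x, w⟫ s - c m) / (s ‖w‖²)` is nonnegative precisely because the ball maximiser
lies outside the half-space, and it makes the bound equal to the closed form, which is attained at
`θ0 + (c/‖w‖²) • w + (s/m) • x⊥`, with `x⊥` the component of `x` orthogonal to `w`. If `s = 0`,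
the dome is a single point. -/

open RealInnerProductSpace

/-- Reading `(a, √(X² - a²))` and `(b, √(r² - b²))` as points of the upper half-plane, this says
that their cross product is nonnegative once the second has the larger polar angle. -/
theorem mul_sqrt_sub_sq_le {a b X r : ℝ} (hX : 0 ≤ X) (hr : 0 ≤ r) (ha : a ^ 2 ≤ X ^ 2)
    (hb : b ^ 2 ≤ r ^ 2) (h : b * X < a * r) :
    b * √(X ^ 2 - a ^ 2) ≤ a * √(r ^ 2 - b ^ 2) := by
  set m := √(X ^ 2 - a ^ 2)
  set s := √(r ^ 2 - b ^ 2)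
  have hm : m ^ 2 = X ^ 2 - a ^ 2 := Real.sq_sqrt (by linarith)
  have hs : s ^ 2 = r ^ 2 - b ^ 2 := Real.sq_sqrt (by linarith)
  have key : (a * s) ^ 2 - (b * m) ^ 2 = (a * r - b * X) * (a * r + b * X) := by
    linear_combination a ^ 2 * hs - b ^ 2 * hm
  have hm0 : 0 ≤ m := Real.sqrt_nonneg _
  have hs0 : 0 ≤ s := Real.sqrt_nonneg _
  rcases le_or_gt 0 (a * r + b * X) with hpos | hneg
  · have ha0 : 0 ≤ a := by nlinarith
    have : |b * m| ≤ |a * s| := sq_le_sq.mp (by nlinarith)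
    rw [abs_of_nonneg (by positivity : 0 ≤ a * s)] at this
    exact (le_abs_self _).trans this
  · have hb0 : b ≤ 0 := by nlinarith
    have : |a * s| ≤ |b * m| := sq_le_sq.mp (by nlinarith)
    rw [abs_of_nonpos (by nlinarith : b * m ≤ 0)] at this
    linarith [neg_abs_le (a * s)]

section

variable {E : Type*} [NormedAddCommGroup E] [InnerProductSpace ℝ E]

theorem inner_sub_smul_proj_eq_zero {w : E} (hw : w ≠ 0) (x : E) :
    ⟪w, x - (⟪x, w⟫ / ‖w‖ ^ 2) • w⟫ = 0 := by
  have : ‖w‖ ≠ 0 := norm_ne_zero_iff.mpr hw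
  rw [inner_sub_right, real_inner_smul_right, real_inner_self_eq_norm_sq, real_inner_comm]
  field_simp
  ring

theorem norm_sub_smul_proj_sq {w : E} (hw : w ≠ 0) (x : E) :
    ‖x - (⟪x, w⟫ / ‖w‖ ^ 2) • w‖ ^ 2 = ‖x‖ ^ 2 - ⟪x, w⟫ ^ 2 / ‖w‖ ^ 2 := by
  have : ‖w‖ ≠ 0 := norm_ne_zero_iff.mpr hw
  rw [norm_sub_sq_real, real_inner_smul_right, norm_smul, Real.norm_eq_abs, mul_pow, sq_abs]
  field_simp
  ring

def dome (θ0 : E) (r : ℝ) (w : E) (e : ℝ) : Set E :=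
  {θ | ‖θ - θ0‖ ≤ r} ∩ {θ | ⟪w, θ⟫ ≤ e}

noncomputable def domeMax (θ0 : E) (r : ℝ) (w : E) (e : ℝ) (x : E) : ℝ :=
  ⟪x, θ0⟫ + (e - ⟪w, θ0⟫) * ⟪x, w⟫ / ‖w‖ ^ 2 +
    √(r ^ 2 - (e - ⟪w, θ0⟫) ^ 2 / ‖w‖ ^ 2) * √(‖x‖ ^ 2 - ⟪x, w⟫ ^ 2 / ‖w‖ ^ 2)

variable {θ0 w x θ : E} {r e : ℝ}

theorem inner_le_of_mem_dome (hθ : θ ∈ dome θ0 r w e) {t : ℝ} (ht : 0 ≤ t) :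
    ⟪x, θ⟫ ≤ ⟪x, θ0⟫ + t * (e - ⟪w, θ0⟫) + r * ‖x - t • w‖ := by
  obtain ⟨hball, hhalf : ⟪w, θ⟫ ≤ e⟩ := hθ
  calc ⟪x, θ⟫ = ⟪x, θ0⟫ + t * (⟪w, θ⟫ - ⟪w, θ0⟫) + ⟪x - t • w, θ - θ0⟫ := by
        simp only [inner_sub_left, inner_sub_right, real_inner_smul_left]
        ring
    _ ≤ ⟪x, θ0⟫ + t * (e - ⟪w, θ0⟫) + ‖x - t • w‖ * r := by
        gcongr
        exact (real_inner_le_norm _ _).trans (by gcongr; exact hball)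
    _ = ⟪x, θ0⟫ + t * (e - ⟪w, θ0⟫) + r * ‖x - t • w‖ := by ring

theorem isGreatest_inner_dome_of_inner_le (hr : 0 ≤ r) (h : ⟪w, θ0 + (r / ‖x‖) • x⟫ ≤ e) :
    IsGreatest ((fun θ => ⟪x, θ⟫) '' dome θ0 r w e) (⟪x, θ0⟫ + r * ‖x‖) := by
  refine ⟨⟨θ0 + (r / ‖x‖) • x, ⟨?_, h⟩, ?_⟩, ?_⟩
  · rcases eq_or_ne x 0 with rfl | hx
    · simpa using hr
    · have : ‖x‖ ≠ 0 := norm_ne_zero_iff.mpr hx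
      simp [norm_smul, abs_of_nonneg hr, this]
  · rcases eq_or_ne x 0 with rfl | hx
    · simp
    · have : ‖x‖ ≠ 0 := norm_ne_zero_iff.mpr hx
      simp only [inner_add_right, real_inner_smul_right, real_inner_self_eq_norm_sq]
      field_simp
  · rintro _ ⟨θ, hθ, rfl⟩
    simpa using inner_le_of_mem_dome (x := x) hθ le_rfl

theorem eq_of_mem_dome_of_eq_neg (hw : w ≠ 0) (hθ : θ ∈ dome θ0 r w e)
    (he : e - ⟪w, θ0⟫ = -(r * ‖w‖)) : θ = θ0 - (r / ‖w‖) • w := by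
  obtain ⟨hball, hhalf : ⟪w, θ⟫ ≤ e⟩ := hθ
  have hW : 0 < ‖w‖ := norm_pos_iff.mpr hw
  have hr : 0 ≤ r := (norm_nonneg _).trans hball
  have hp : (r / ‖w‖) * ⟪θ - θ0, w⟫ ≤ (r / ‖w‖) * -(r * ‖w‖) := by
    gcongr
    rw [real_inner_comm, inner_sub_right]
    linarith
  have hsq : ‖θ - θ0 + (r / ‖w‖) • w‖ ^ 2 ≤ 0 := by
    rw [norm_add_sq_real, real_inner_smul_right, norm_smul, Real.norm_eq_abs,
      abs_of_nonneg (by positivity)]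
    field_simp at hp ⊢
    nlinarith [pow_le_pow_left₀ (norm_nonneg _) hball 2]
  rw [← sub_eq_zero, ← sub_add, ← norm_eq_zero]
  exact pow_eq_zero_iff two_ne_zero |>.mp (le_antisymm hsq (sq_nonneg _))

theorem domeMax_mem_image (hw : w ≠ 0) (he : |e - ⟪w, θ0⟫| ≤ r * ‖w‖) (x : E) :
    domeMax θ0 r w e x ∈ (fun θ => ⟪x, θ⟫) '' dome θ0 r w e := by
  set c := e - ⟪w, θ0⟫
  set y := x - (⟪x, w⟫ / ‖w‖ ^ 2) • w
  set s := √(r ^ 2 - c ^ 2 / ‖w‖ ^ 2)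
  have hW : 0 < ‖w‖ := norm_pos_iff.mpr hw
  have hwy : ⟪w, y⟫ = 0 := inner_sub_smul_proj_eq_zero hw x
  have hy : ‖y‖ ^ 2 = ‖x‖ ^ 2 - ⟪x, w⟫ ^ 2 / ‖w‖ ^ 2 := norm_sub_smul_proj_sq hw x
  have hxy : ⟪x, y⟫ = ‖y‖ ^ 2 := by
    rw [hy, inner_sub_right, real_inner_smul_right, real_inner_self_eq_norm_sq]
    ring
  have hs : s ^ 2 = r ^ 2 - c ^ 2 / ‖w‖ ^ 2 := by
    refine Real.sq_sqrt (sub_nonneg.mpr ?_)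
    rw [div_le_iff₀ (by positivity), ← mul_pow]
    exact sq_le_sq' (abs_le.mp he).1 (abs_le.mp he).2
  have hscale : (s / ‖y‖) * ‖y‖ ^ 2 = s * ‖y‖ ∧ (s / ‖y‖) ^ 2 * ‖y‖ ^ 2 ≤ s ^ 2 := by
    rcases (norm_nonneg y).eq_or_lt with h0 | hpos
    · simp [← h0, sq_nonneg s]
    · exact ⟨by field_simp, (by field_simp : (s / ‖y‖) ^ 2 * ‖y‖ ^ 2 = s ^ 2).le⟩
  refine ⟨θ0 + (c / ‖w‖ ^ 2) • w + (s / ‖y‖) • y, ⟨?_, ?_⟩, ?_⟩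
  · show ‖θ0 + (c / ‖w‖ ^ 2) • w + (s / ‖y‖) • y - θ0‖ ≤ r
    rw [add_assoc, add_sub_cancel_left]
    refine pow_le_pow_iff_left₀ (norm_nonneg _) ?_ two_ne_zero |>.mp ?_
    · nlinarith [abs_nonneg c]
    · have hperp : ⟪(c / ‖w‖ ^ 2) • w, (s / ‖y‖) • y⟫ = 0 := by
        rw [real_inner_smul_left, real_inner_smul_right, hwy, mul_zero, mul_zero]
      have hcw : (c / ‖w‖ ^ 2) ^ 2 * ‖w‖ ^ 2 = c ^ 2 / ‖w‖ ^ 2 := by field_simp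
      rw [norm_add_sq_real, hperp, mul_zero, add_zero, norm_smul, norm_smul, mul_pow, mul_pow,
        Real.norm_eq_abs, Real.norm_eq_abs, sq_abs, sq_abs, hcw]
      linarith [hscale.2]
  · show ⟪w, θ0 + (c / ‖w‖ ^ 2) • w + (s / ‖y‖) • y⟫ ≤ e
    rw [inner_add_right, inner_add_right, real_inner_smul_right, real_inner_smul_right, hwy,
      real_inner_self_eq_norm_sq]
    field_simp
    simp [c]
  · show ⟪x, θ0 + (c / ‖w‖ ^ 2) • w + (s / ‖y‖) • y⟫ = domeMax θ0 r w e x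
    rw [inner_add_right, inner_add_right, real_inner_smul_right, real_inner_smul_right, hxy,
      hscale.1, domeMax, ← hy, Real.sqrt_sq (norm_nonneg y)]
    ring

theorem inner_le_domeMax_of_sqrt_pos (hw : w ≠ 0) (hθ : θ ∈ dome θ0 r w e)
    (hs : 0 < √(r ^ 2 - (e - ⟪w, θ0⟫) ^ 2 / ‖w‖ ^ 2))
    (hcase : (e - ⟪w, θ0⟫) * ‖x‖ < r * ⟪x, w⟫) :
    ⟪x, θ⟫ ≤ domeMax θ0 r w e x := by
  unfold domeMax
  set c := e - ⟪w, θ0⟫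
  set k := ⟪x, w⟫
  set s := √(r ^ 2 - c ^ 2 / ‖w‖ ^ 2)
  set m := √(‖x‖ ^ 2 - k ^ 2 / ‖w‖ ^ 2)
  have hW : 0 < ‖w‖ := norm_pos_iff.mpr hw
  have hr : 0 ≤ r := (norm_nonneg _).trans hθ.1
  have hr2 : r ^ 2 = s ^ 2 + c ^ 2 / ‖w‖ ^ 2 := by
    rw [Real.sq_sqrt (Real.sqrt_pos.mp hs).le]
    ring
  have hk : k ^ 2 / ‖w‖ ^ 2 ≤ ‖x‖ ^ 2 := by
    rw [div_le_iff₀ (by positivity), ← mul_pow, ← sq_abs k]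
    exact pow_le_pow_left₀ (abs_nonneg _) (abs_real_inner_le_norm x w) 2
  have hx2 : ‖x‖ ^ 2 = m ^ 2 + k ^ 2 / ‖w‖ ^ 2 := by
    rw [Real.sq_sqrt (sub_nonneg.mpr hk)]
    ring
  have hcm : c * m ≤ k * s := by
    have := mul_sqrt_sub_sq_le (a := k / ‖w‖) (b := c / ‖w‖) (norm_nonneg x) hr
      (by rwa [div_pow]) (by rw [div_pow, hr2]; linarith [sq_nonneg s])
      (by rw [div_mul_eq_mul_div, mul_comm_div, ← mul_div_assoc, mul_comm k r]
          exact div_lt_div_of_pos_right hcase hW)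
    rw [div_pow, div_pow, div_mul_eq_mul_div, div_mul_eq_mul_div] at this
    exact (div_le_div_iff_of_pos_right hW).mp this
  set t := (k * s - c * m) / (s * ‖w‖ ^ 2) with ht_def
  have ht : 0 ≤ t := div_nonneg (by linarith) (by positivity)
  have hnorm : ‖x - t • w‖ = r * m / s := by
    refine (pow_left_inj₀ (norm_nonneg _) (by positivity) two_ne_zero).mp ?_
    rw [norm_sub_sq_real, real_inner_smul_right, norm_smul, Real.norm_eq_abs, mul_pow, sq_abs]
    rw [ht_def, hx2, div_pow (r * m), mul_pow r, hr2]
    field_simp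
    ring
  calc ⟪x, θ⟫ ≤ ⟪x, θ0⟫ + t * c + r * ‖x - t • w‖ := inner_le_of_mem_dome hθ ht
    _ = _ := by
      rw [hnorm, ht_def, show r * (r * m / s) = r ^ 2 * m / s by ring, hr2]
      field_simp
      ring

theorem isGreatest_inner_dome_of_lt (hw : w ≠ 0) (he : |e - ⟪w, θ0⟫| ≤ r * ‖w‖)
    (hcase : (e - ⟪w, θ0⟫) * ‖x‖ < r * ⟪x, w⟫) :
    IsGreatest ((fun θ => ⟪x, θ⟫) '' dome θ0 r w e) (domeMax θ0 r w e x) := by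
  refine ⟨domeMax_mem_image hw he x, ?_⟩
  rintro _ ⟨θ, hθ, rfl⟩
  dsimp only
  rcases (Real.sqrt_nonneg (r ^ 2 - (e - ⟪w, θ0⟫) ^ 2 / ‖w‖ ^ 2)).eq_or_lt with hs | hs
  · have hW : 0 < ‖w‖ := norm_pos_iff.mpr hw
    have hr : 0 ≤ r := (norm_nonneg _).trans hθ.1
    have hsq : r ^ 2 * ‖w‖ ^ 2 ≤ (e - ⟪w, θ0⟫) ^ 2 := by
      have := Real.sqrt_eq_zero'.mp hs.symm
      rwa [sub_nonpos, le_div_iff₀ (by positivity)] at this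
    -- `e - ⟪w, θ0⟫ = r‖w‖` would put the whole ball in the half-space, against `hcase`
    have hlt : e - ⟪w, θ0⟫ < r * ‖w‖ := by
      have := mul_le_mul_of_nonneg_left (real_inner_le_norm x w) hr
      nlinarith [norm_nonneg x]
    have hc : e - ⟪w, θ0⟫ = -(r * ‖w‖) := by
      nlinarith [(abs_le.mp he).1]
    rw [eq_of_mem_dome_of_eq_neg hw hθ hc, domeMax, ← hs, zero_mul, add_zero, hc,
      inner_sub_right, real_inner_smul_right]
    field_simp
    linarith
  · exact inner_le_domeMax_of_sqrt_pos hw hθ hs hcase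

end

theorem linear_max_over_dome_general {d : ℕ}
    (θ0 w x : EuclideanSpace ℝ (Fin d)) (r e : ℝ)
    (hr : 0 < r) (hw : w ≠ 0) (hx : x ≠ 0) :
    ((⟪w, θ0 + (r / ‖x‖) • x⟫ ≤ e) →
      IsGreatest ((fun θ : EuclideanSpace ℝ (Fin d) => ⟪x, θ⟫) ''
          ({θ | ‖θ - θ0‖ ≤ r} ∩ {θ | ⟪w, θ⟫ ≤ e}))
        (⟪x, θ0⟫ + r * ‖x‖)) ∧
    ((¬ (⟪w, θ0 + (r / ‖x‖) • x⟫ ≤ e)) → |e - ⟪w, θ0⟫| ≤ r * ‖w‖ →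
      IsGreatest ((fun θ : EuclideanSpace ℝ (Fin d) => ⟪x, θ⟫) ''
          ({θ | ‖θ - θ0‖ ≤ r} ∩ {θ | ⟪w, θ⟫ ≤ e}))
        (⟪x, θ0⟫ + (e - ⟪w, θ0⟫) * ⟪x, w⟫ / ‖w‖ ^ 2 +
          Real.sqrt (r ^ 2 - (e - ⟪w, θ0⟫) ^ 2 / ‖w‖ ^ 2) *
          Real.sqrt (‖x‖ ^ 2 - ⟪x, w⟫ ^ 2 / ‖w‖ ^ 2))) := by
  refine ⟨isGreatest_inner_dome_of_inner_le hr.le, fun hout he => ?_⟩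
  refine isGreatest_inner_dome_of_lt hw he ?_
  have hX : 0 < ‖x‖ := norm_pos_iff.mpr hx
  rw [not_le, inner_add_right, real_inner_smul_right, real_inner_comm x w] at hout
  calc (e - ⟪w, θ0⟫) * ‖x‖ < (r / ‖x‖ * ⟪x, w⟫) * ‖x‖ := by gcongr; linarith
    _ = r * ⟪x, w⟫ := by field_simp

theorem linear_max_over_dome {d : ℕ}
    (θ0 w x : EuclideanSpace ℝ (Fin d)) (r e : ℝ)
    (hr : 0 < r) (hw : w ≠ 0) (hx : x ≠ 0)
    (hne : ({θ : EuclideanSpace ℝ (Fin d) | ‖θ - θ0‖ ≤ r} ∩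
            {θ | ⟪w, θ⟫ ≤ e}).Nonempty) :
    ((⟪w, θ0 + (r / ‖x‖) • x⟫ ≤ e) →
      IsGreatest ((fun θ : EuclideanSpace ℝ (Fin d) => ⟪x, θ⟫) ''
          ({θ | ‖θ - θ0‖ ≤ r} ∩ {θ | ⟪w, θ⟫ ≤ e}))
        (⟪x, θ0⟫ + r * ‖x‖)) ∧
    ((¬ (⟪w, θ0 + (r / ‖x‖) • x⟫ ≤ e)) → |e - ⟪w, θ0⟫| ≤ r * ‖w‖ →
      IsGreatest ((fun θ : EuclideanSpace ℝ (Fin d) => ⟪x, θ⟫) ''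
          ({θ | ‖θ - θ0‖ ≤ r} ∩ {θ | ⟪w, θ⟫ ≤ e}))
        (⟪x, θ0⟫ + (e - ⟪w, θ0⟫) * ⟪x, w⟫ / ‖w‖ ^ 2 +
          Real.sqrt (r ^ 2 - (e - ⟪w, θ0⟫) ^ 2 / ‖w‖ ^ 2) *
          Real.sqrt (‖x‖ ^ 2 - ⟪x, w⟫ ^ 2 / ‖w‖ ^ 2))) :=
  linear_max_over_dome_general θ0 w x r e hr hw hx
end
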